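/- Suppose $(W(T;u,W_0))$ denotes a control system on a Banach space $X$ with, for each admissible control $u$ on $[0,T]$, a continuous map $W(T;u,\cdot): X \to X$, and say a bounded operator $L$ on $X$ is STAR if for every $W_0 \in X$ and $\epsilon > 0$ there exist $T \in [0,\epsilon]$ and a control $u$ with $\|W(T;u,W_0) - LW_0\| < \epsilon$, and suppose the system allows concatenation of controls (with times adding). Then: (1) the composition $L_2 L_1$ of two STAR operators is STAR; (2) if $(L_n)$ are STAR operators converging strongly to a bounded operator $L$, then $L$ is STAR. -/

import Mathlib

open Filter Topology

/-! For a composition, first steer `W₀` close enough to `L₁ W₀` that the continuous flow map of a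
control approximating `L₂` at `L₁ W₀` keeps the error small, then concatenate the two controls.
For a strong limit `L'`, pass through `Lₙ W₀` for some `n` with `Lₙ W₀` close to `L' W₀`. -/

/-- A bounded operator `L` on `X` is small-time approximately reachable (STAR) for the control
system `(time, W)`: for every initial state `W₀` and every `ε > 0` there is a control `u` with
duration `time u ∈ [0, ε]` such that `‖W(u, W₀) - L W₀‖ < ε`. -/
def IsSTAR {X U : Type*} [NormedAddCommGroup X]
    (time : U → ℝ) (W : U → X → X) (L : X → X) : Prop :=
  ∀ (W0 : X) (ε : ℝ), 0 < ε → ∃ u : U, time u ∈ Set.Icc (0:ℝ) ε ∧ ‖W u W0 - L W0‖ < ε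

theorem IsSTAR.comp {X U : Type*} [NormedAddCommGroup X] {time : U → ℝ} {W : U → X → X}
    (hcont : ∀ u, Continuous (W u))
    (hconcat : ∀ u1 u2 : U, ∃ u : U,
      time u = time u1 + time u2 ∧ ∀ x, W u x = W u2 (W u1 x))
    {L1 L2 : X → X} (h1 : IsSTAR time W L1) (h2 : IsSTAR time W L2) :
    IsSTAR time W (fun x => L2 (L1 x)) := by
  intro W0 ε hε
  obtain ⟨u2, ⟨ht2₀, ht2⟩, hu2⟩ := h2 (L1 W0) (ε / 2) (half_pos hε)
  obtain ⟨δ, hδ, hWδ⟩ := Metric.continuous_iff.1 (hcont u2) (L1 W0) (ε / 2) (half_pos hε)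
  obtain ⟨u1, ⟨ht1₀, ht1⟩, hu1⟩ := h1 W0 (min δ (ε / 2)) (lt_min hδ (half_pos hε))
  obtain ⟨u, htime, hW⟩ := hconcat u1 u2
  rw [← dist_eq_norm] at hu1 hu2
  have hclose : dist (W u2 (W u1 W0)) (W u2 (L1 W0)) < ε / 2 :=
    hWδ _ (hu1.trans_le (min_le_left _ _))
  refine ⟨u, ⟨?_, ?_⟩, ?_⟩
  · rw [htime]
    exact add_nonneg ht1₀ ht2₀
  · rw [htime]
    linarith [min_le_right δ (ε / 2)]
  · rw [hW, ← dist_eq_norm]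
    calc dist (W u2 (W u1 W0)) (L2 (L1 W0))
        ≤ dist (W u2 (W u1 W0)) (W u2 (L1 W0)) + dist (W u2 (L1 W0)) (L2 (L1 W0)) :=
          dist_triangle _ _ _
      _ < ε / 2 + ε / 2 := add_lt_add hclose hu2
      _ = ε := add_halves ε

theorem IsSTAR.of_tendsto {ι X U : Type*} [NormedAddCommGroup X] {time : U → ℝ}
    {W : U → X → X} {l : Filter ι} [l.NeBot] {L : ι → X → X} {L' : X → X}
    (hL : ∀ i, IsSTAR time W (L i)) (hlim : ∀ x, Tendsto (fun i => L i x) l (𝓝 (L' x))) :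
    IsSTAR time W L' := by
  intro W0 ε hε
  obtain ⟨i, hi⟩ := ((hlim W0).eventually (Metric.ball_mem_nhds _ (half_pos hε))).exists
  obtain ⟨u, ⟨ht₀, ht⟩, hu⟩ := hL i W0 (ε / 2) (half_pos hε)
  refine ⟨u, ⟨ht₀, by linarith⟩, ?_⟩
  rw [← dist_eq_norm] at hu ⊢
  calc dist (W u W0) (L' W0) ≤ dist (W u W0) (L i W0) + dist (L i W0) (L' W0) :=
        dist_triangle _ _ _
    _ < ε / 2 + ε / 2 := add_lt_add hu hi
    _ = ε := add_halves ε

/-- For a control system on a Banach space whose flow maps are continuous and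
which allows concatenation of controls (durations adding), (1) the composition of two STAR
bounded operators is STAR, and (2) a strong limit of STAR operators is STAR. -/
theorem stmt19 {X U : Type*} [NormedAddCommGroup X] [NormedSpace ℝ X]
    (time : U → ℝ) (W : U → X → X)
    (hcont : ∀ u, Continuous (W u))
    (hconcat : ∀ u1 u2 : U, ∃ u : U,
      time u = time u1 + time u2 ∧ ∀ x, W u x = W u2 (W u1 x)) :
    (∀ L1 L2 : X →L[ℝ] X, IsSTAR time W L1 → IsSTAR time W L2 →
      IsSTAR time W (fun x => L2 (L1 x))) ∧
    (∀ (L : ℕ → X →L[ℝ] X) (L' : X →L[ℝ] X),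
      (∀ n, IsSTAR time W (L n)) →
      (∀ x, Tendsto (fun n => L n x) atTop (𝓝 (L' x))) →
      IsSTAR time W L') :=
  ⟨fun _ _ h1 h2 => h1.comp hcont hconcat h2, fun _ _ hL hlim => IsSTAR.of_tendsto hL hlim⟩
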